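/- For any n ≥ 5 and any p > 1, λ_{1,p}(T_{n,4}) > λ_{1,p}(T_{n,3}). -/

import Mathlib

open scoped Classical

noncomputable section

/-- The term `|f x - f y| ^ p` as a function on unordered pairs. -/
noncomputable def edgeTerm {V : Type*} (p : ℝ) (f : V → ℝ) : Sym2 V → ℝ :=
  Sym2.lift ⟨fun x y => |f x - f y| ^ p, fun x y => by dsimp only; rw [abs_sub_comm]⟩

/-- The `p`-Rayleigh quotient of a function on a finite graph. -/
noncomputable def rayleigh {V : Type*} [Fintype V] [DecidableEq V] (G : SimpleGraph V)
    (p : ℝ) (f : V → ℝ) : ℝ :=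
  (∑ e ∈ G.edgeFinset, edgeTerm p f e) / ∑ v, |f v| ^ p

/-- The first `p`-Dirichlet eigenvalue: infimum of the Rayleigh quotient over nonzero
functions vanishing on the boundary (vertices of degree one). -/
noncomputable def lambda1 {V : Type*} [Fintype V] [DecidableEq V] (G : SimpleGraph V)
    (p : ℝ) : ℝ :=
  sInf {r | ∃ f : V → ℝ, f ≠ 0 ∧ (∀ v, G.degree v = 1 → f v = 0) ∧ r = rayleigh G p f}

/-- The tadpole graph `T_{n,i}` on vertices `0,…,n-1` (vertex `t_k` is `k-1`):
edges `t_k t_{k+1}` for `1 ≤ k ≤ n-1` together with the edge `t_1 t_i`. -/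
def tadpole (n i : ℕ) : SimpleGraph (Fin n) :=
  SimpleGraph.fromRel (fun a b => a.val + 1 = b.val ∨ (a.val = 0 ∧ b.val = i - 1))

/-- The path graph on `n` vertices `0,…,n-1`. -/
def pathG (n : ℕ) : SimpleGraph (Fin n) :=
  SimpleGraph.fromRel (fun a b : Fin n => a.val + 1 = b.val)

/-- The set of edges of `G` with exactly one endpoint in `U`. -/
noncomputable def crossEdges {V : Type*} [Fintype V] [DecidableEq V] (G : SimpleGraph V)
    (U : Finset V) : Finset (Sym2 V) :=
  G.edgeFinset.filter fun e =>
    Sym2.lift ⟨fun x y => (x ∈ U ∧ y ∉ U) ∨ (x ∉ U ∧ y ∈ U),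
      fun x y => by simp only [eq_iff_iff]; tauto⟩ e

/-- The Dirichlet Cheeger constant: infimum of `|E(U,Uᶜ)|/|U|` over nonempty sets `U`
of interior vertices (vertices of degree at least two). -/
noncomputable def dCheeger {V : Type*} [Fintype V] [DecidableEq V] (G : SimpleGraph V) : ℝ :=
  sInf {r | ∃ U : Finset V, U.Nonempty ∧ (∀ v ∈ U, 2 ≤ G.degree v) ∧
    r = ((crossEdges G U).card : ℝ) / U.card}

/-!
Let `f ≥ 0` be a minimizer on `T_{n,4}` with `∑ |f| ^ p = 1`, and `a₀, a₁, a₂, a₃` its values on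
the cycle `t₁ t₂ t₃ t₄` (the tail hangs at `t₄`). Fold the cycle onto the triangle of `T_{n,3}`:
put the `p`-mean `A = ((a₀ ^ p + a₂ ^ p) / 2) ^ (1 / p)` of the opposite pair on the junction `t₃`,
`max a₁ A` on `t₁` and `t₂`, and keep the tail. By Minkowski's inequality
`2 |c - A| ^ p ≤ |c - a₀| ^ p + |c - a₂| ^ p` for `c = a₁, a₃`, so the energy does not increase,
and the mass does not decrease; one of them changes strictly unless `a₁ = a₃ = A`. In that last
case, raising `t₁, t₂` from `A` to `A + t` adds `O(t ^ p)` to the energy but `≈ t` to the mass.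
This needs `A > 0`: a nonnegative minimizer cannot vanish next to a positive value, so `a₀ > 0`.
-/

open Filter Topology

section RealInequalities

variable {p : ℝ}

lemma abs_sub_rpow_le_rpow_add_rpow (hp : 0 ≤ p) {x y : ℝ} (hx : 0 ≤ x) (hy : 0 ≤ y) :
    |x - y| ^ p ≤ x ^ p + y ^ p := by
  rcases le_total x y with hxy | hxy
  · have : |x - y| ^ p ≤ y ^ p := Real.rpow_le_rpow (abs_nonneg _)
      (by rw [abs_sub_comm, abs_of_nonneg (by linarith)]; linarith) hp
    linarith [Real.rpow_nonneg hx p]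
  · have : |x - y| ^ p ≤ x ^ p := Real.rpow_le_rpow (abs_nonneg _)
      (by rw [abs_of_nonneg (by linarith)]; linarith) hp
    linarith [Real.rpow_nonneg hy p]

lemma rpow_add_mul_le_rpow_add (hp : 1 ≤ p) {c t : ℝ} (hc : 0 < c) (ht : 0 ≤ t) :
    c ^ p + p * c ^ (p - 1) * t ≤ (c + t) ^ p := by
  have hbern : 1 + p * (t / c) ≤ (1 + t / c) ^ p :=
    one_add_mul_self_le_rpow_one_add (by linarith [div_nonneg ht hc.le]) hp
  calc c ^ p + p * c ^ (p - 1) * t = c ^ p * (1 + p * (t / c)) := by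
        rw [Real.rpow_sub hc, Real.rpow_one]; field_simp
    _ ≤ c ^ p * (1 + t / c) ^ p := by gcongr
    _ = (c + t) ^ p := by
        rw [← Real.mul_rpow hc.le (by positivity), mul_add, mul_one, mul_div_cancel₀ _ hc.ne']

lemma two_mul_abs_sub_rpow_le (hp : 1 ≤ p) {x y c A : ℝ} (hx : 0 ≤ x) (hy : 0 ≤ y)
    (hc : 0 ≤ c) (hA : 0 ≤ A) (hmean : 2 * A ^ p = x ^ p + y ^ p) :
    2 * |c - A| ^ p ≤ |c - x| ^ p + |c - y| ^ p := by
  have hp0 : p ≠ 0 := by positivity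
  set s : ℝ := 2 ^ p⁻¹
  set D : ℝ := (|c - x| ^ p + |c - y| ^ p) ^ p⁻¹
  have hroot : ∀ z, 0 ≤ z → (2 * z ^ p) ^ p⁻¹ = s * z := fun z hz => by
    rw [Real.mul_rpow zero_le_two (by positivity), Real.rpow_rpow_inv hz hp0]
  -- reverse triangle inequality `|‖(x, y)‖ - ‖(c, c)‖| ≤ ‖(c - x, c - y)‖` in `ℓᵖ`
  have h1 := Real.Lp_add_le Finset.univ ![c, c] ![x - c, y - c] hp
  have h2 := Real.Lp_add_le Finset.univ ![x, y] ![c - x, c - y] hp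
  simp only [Fin.sum_univ_two, Matrix.cons_val_zero, Matrix.cons_val_one, add_sub_cancel,
    abs_of_nonneg hx, abs_of_nonneg hy, abs_of_nonneg hc, ← two_mul, one_div, hroot c hc,
    ← hmean, hroot A hA] at h1 h2
  rw [abs_sub_comm x, abs_sub_comm y] at h1
  have hsD : s * |c - A| ≤ D := by
    rw [← abs_of_pos (show 0 < s by positivity), ← abs_mul, abs_le]
    constructor <;> linarith
  calc 2 * |c - A| ^ p = (s * |c - A|) ^ p := by
        rw [Real.mul_rpow (by positivity) (abs_nonneg _), Real.rpow_inv_rpow zero_le_two hp0]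
    _ ≤ D ^ p := by gcongr
    _ = |c - x| ^ p + |c - y| ^ p := Real.rpow_inv_rpow (by positivity) hp0

lemma eventually_mul_rpow_lt {q B : ℝ} (hq : 0 < q) (hB : 0 < B) (C : ℝ) :
    ∀ᶠ t in 𝓝[>] (0 : ℝ), C * t ^ q < B := by
  have : Tendsto (fun t : ℝ => C * t ^ q) (𝓝[>] 0) (𝓝 0) := by
    have h := ((Real.continuousAt_rpow_const 0 q (Or.inr hq.le)).const_mul C).tendsto
    rw [Real.zero_rpow hq.ne', mul_zero] at h
    exact h.mono_left nhdsWithin_le_nhds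
  exact this.eventually_lt_const hB

lemma sum_range_eq_add_sum_Ico_three {M : Type*} [AddCommMonoid M] (f : ℕ → M) {m : ℕ}
    (hm : 3 ≤ m) : ∑ k ∈ Finset.range m, f k = f 0 + f 1 + f 2 + ∑ k ∈ Finset.Ico 3 m, f k := by
  rw [← Finset.sum_range_add_sum_Ico f hm]
  simp [Finset.sum_range_succ]

lemma sum_range_abs_sub_rpow_pos {H : ℕ → ℝ} {m : ℕ} (h : H 0 ≠ H m) :
    0 < ∑ k ∈ Finset.range m, |H k - H (k + 1)| ^ p := by
  have hsum : ∑ k ∈ Finset.range m, (H (k + 1) - H k) ≠ 0 := by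
    rw [Finset.sum_range_sub]
    exact sub_ne_zero.2 h.symm
  obtain ⟨k, hk, hne⟩ := Finset.exists_ne_zero_of_sum_ne_zero hsum
  exact Finset.sum_pos' (fun _ _ => Real.rpow_nonneg (abs_nonneg _) _)
    ⟨k, hk, Real.rpow_pos_of_pos (abs_pos.2 (sub_ne_zero.2 (sub_ne_zero.1 hne).symm)) _⟩

end RealInequalities

section Graph

variable {V : Type*}

@[simp] lemma edgeTerm_mk {p : ℝ} (f : V → ℝ) (x y : V) :
    edgeTerm p f s(x, y) = |f x - f y| ^ p := rfl

lemma edgeTerm_nonneg {p : ℝ} (f : V → ℝ) (e : Sym2 V) : 0 ≤ edgeTerm p f e := by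
  induction e using Sym2.ind with
  | _ x y => exact Real.rpow_nonneg (abs_nonneg _) _

lemma edgeTerm_update_le [DecidableEq V] {p : ℝ} (hp : 0 ≤ p) {f : V → ℝ} (hf : ∀ u, 0 ≤ f u)
    {v : V} (hfv : f v = 0) {t : ℝ} (ht : 0 ≤ t) (e : Sym2 V) :
    edgeTerm p (Function.update f v t) e ≤ edgeTerm p f e + if v ∈ e then t ^ p else 0 := by
  induction e using Sym2.ind with
  | _ x y =>
    by_cases hx : x = v <;> by_cases hy : y = v
    · subst hx hy
      simp [Real.rpow_nonneg ht]
    · subst hx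
      simpa [hy, hfv, abs_of_nonneg (hf y), add_comm] using
        abs_sub_rpow_le_rpow_add_rpow hp ht (hf y)
    · subst hy
      simpa [hx, hfv, abs_of_nonneg (hf x), abs_sub_comm, add_comm] using
        abs_sub_rpow_le_rpow_add_rpow hp ht (hf x)
    · simp [hx, hy, Ne.symm hx, Ne.symm hy]

variable [Fintype V] (G : SimpleGraph V) (p : ℝ)

def pEnergy (f : V → ℝ) : ℝ := ∑ e ∈ G.edgeFinset, edgeTerm p f e

def pMass (f : V → ℝ) : ℝ := ∑ v, |f v| ^ p

variable {G p}

lemma pEnergy_nonneg (f : V → ℝ) : 0 ≤ pEnergy G p f :=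
  Finset.sum_nonneg fun e _ => edgeTerm_nonneg f e

lemma pMass_nonneg (f : V → ℝ) : 0 ≤ pMass p f :=
  Finset.sum_nonneg fun _ _ => Real.rpow_nonneg (abs_nonneg _) _

lemma pMass_pos {f : V → ℝ} (hf : f ≠ 0) : 0 < pMass p f := by
  obtain ⟨v, hv⟩ := Function.ne_iff.1 hf
  exact Finset.sum_pos' (fun w _ => Real.rpow_nonneg (abs_nonneg _) _)
    ⟨v, Finset.mem_univ v, Real.rpow_pos_of_pos (abs_pos.2 hv) _⟩

lemma abs_smul_rpow (c x : ℝ) : |c • x| ^ p = |c| ^ p * |x| ^ p := by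
  rw [smul_eq_mul, abs_mul, Real.mul_rpow (abs_nonneg _) (abs_nonneg _)]

lemma pEnergy_smul (c : ℝ) (f : V → ℝ) : pEnergy G p (c • f) = |c| ^ p * pEnergy G p f := by
  rw [pEnergy, pEnergy, Finset.mul_sum]
  refine Finset.sum_congr rfl fun e _ => ?_
  induction e using Sym2.ind with
  | _ x y => simp only [edgeTerm_mk, Pi.smul_apply, ← smul_sub, abs_smul_rpow]

lemma pMass_smul (c : ℝ) (f : V → ℝ) : pMass p (c • f) = |c| ^ p * pMass p f := by
  simp only [pMass, Finset.mul_sum, Pi.smul_apply, abs_smul_rpow]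

lemma pEnergy_abs_le (hp : 0 ≤ p) (f : V → ℝ) :
    pEnergy G p (fun v => |f v|) ≤ pEnergy G p f := by
  refine Finset.sum_le_sum fun e _ => ?_
  induction e using Sym2.ind with
  | _ x y => exact Real.rpow_le_rpow (abs_nonneg _) (abs_abs_sub_abs_le_abs_sub _ _) hp

lemma pMass_abs (f : V → ℝ) : pMass p (fun v => |f v|) = pMass p f := by
  simp only [pMass, abs_abs]

lemma continuous_pEnergy (hp : 0 ≤ p) : Continuous (pEnergy G p) := by
  refine continuous_finsetSum _ fun e _ => ?_
  induction e using Sym2.ind with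
  | _ x y =>
    exact ((continuous_apply x).sub (continuous_apply y)).abs.rpow_const fun _ => Or.inr hp

lemma continuous_pMass (hp : 0 ≤ p) : Continuous (pMass (V := V) p) :=
  continuous_finsetSum _ fun v _ => (continuous_apply v).abs.rpow_const fun _ => Or.inr hp

lemma isCompact_pMass_eq_one (hp : 0 < p) : IsCompact {f : V → ℝ | pMass p f = 1} := by
  refine Metric.isCompact_of_isClosed_isBounded
    (isClosed_eq (continuous_pMass hp.le) continuous_const) ?_
  refine (Metric.isBounded_iff_subset_closedBall 0).2 ⟨1, fun f hf => ?_⟩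
  rw [Metric.mem_closedBall, dist_zero_right, pi_norm_le_iff_of_nonneg zero_le_one]
  intro v
  have hv : |f v| ^ p ≤ 1 := hf ▸ Finset.single_le_sum
    (fun w _ => Real.rpow_nonneg (abs_nonneg (f w)) p) (Finset.mem_univ v)
  rw [Real.norm_eq_abs]
  by_contra! h
  exact (Real.one_lt_rpow h hp).not_ge hv

variable [DecidableEq V]

lemma rayleigh_eq_div (f : V → ℝ) : rayleigh G p f = pEnergy G p f / pMass p f := rfl

lemma rayleigh_smul {c : ℝ} (hc : c ≠ 0) (f : V → ℝ) :
    rayleigh G p (c • f) = rayleigh G p f := by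
  rw [rayleigh_eq_div, rayleigh_eq_div, pEnergy_smul, pMass_smul,
    mul_div_mul_left _ _ (Real.rpow_pos_of_pos (abs_pos.2 hc) p).ne']

lemma lambda1_le_rayleigh {f : V → ℝ} (hf : f ≠ 0) (hb : ∀ v, G.degree v = 1 → f v = 0) :
    lambda1 G p ≤ rayleigh G p f := by
  refine csInf_le ⟨0, ?_⟩ ⟨f, hf, hb, rfl⟩
  rintro r ⟨g, -, -, rfl⟩
  exact div_nonneg (pEnergy_nonneg g) (pMass_nonneg g)

lemma exists_nonneg_minimizer (hp : 0 < p) {v₀ : V} (hv₀ : G.degree v₀ ≠ 1) :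
    ∃ f : V → ℝ, (∀ v, 0 ≤ f v) ∧ (∀ v, G.degree v = 1 → f v = 0) ∧ pMass p f = 1 ∧
      pEnergy G p f = lambda1 G p := by
  set S : Set (V → ℝ) := {f | pMass p f = 1} ∩ {f | ∀ v, G.degree v = 1 → f v = 0}
  have hS : IsCompact S := (isCompact_pMass_eq_one hp).inter_right <| by
    simp only [Set.ofPred_forall]
    exact isClosed_iInter fun v => isClosed_iInter fun _ =>
      isClosed_eq (continuous_apply v) continuous_const
  have hne : ∀ f ∈ S, f ≠ 0 := by
    rintro f ⟨hf, -⟩ rfl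
    simp [pMass, Real.zero_rpow hp.ne'] at hf
  have hrayleigh : ∀ f ∈ S, rayleigh G p f = pEnergy G p f := fun f hf => by
    rw [rayleigh_eq_div, hf.1, div_one]
  have hδ : Pi.single v₀ 1 ∈ S := by
    refine ⟨?_, fun v hv => Pi.single_eq_of_ne (by rintro rfl; exact hv₀ hv) _⟩
    change ∑ v, _ = _
    rw [Finset.sum_eq_single v₀ (fun v _ hv => by simp [hv, Real.zero_rpow hp.ne']) (by simp)]
    simp
  obtain ⟨g, hgS, hgmin⟩ :=
    hS.exists_isMinOn ⟨_, hδ⟩ (continuous_pEnergy (G := G) hp.le).continuousOn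
  have hmin : pEnergy G p g ≤ lambda1 G p := by
    refine le_csInf ⟨_, g, hne g hgS, hgS.2, rfl⟩ ?_
    rintro r ⟨f, hf, hfb, rfl⟩
    have hM := pMass_pos (p := p) hf
    set c : ℝ := (pMass p f ^ p⁻¹)⁻¹
    have hc : 0 < c := by positivity
    have hcf : c • f ∈ S := by
      refine ⟨?_, fun v hv => by simp [hfb v hv]⟩
      change pMass p (c • f) = 1
      rw [pMass_smul, abs_of_pos hc, Real.inv_rpow (by positivity),
        Real.rpow_inv_rpow hM.le hp.ne', inv_mul_cancel₀ hM.ne']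
    rw [← rayleigh_smul hc.ne', hrayleigh _ hcf]
    exact hgmin hcf
  have hgS' : (fun v => |g v|) ∈ S :=
    ⟨(pMass_abs g).trans hgS.1, fun v hv => by simp [hgS.2 v hv]⟩
  refine ⟨_, fun v => abs_nonneg (g v), hgS'.2, hgS'.1, le_antisymm ?_ ?_⟩
  · exact (pEnergy_abs_le hp.le g).trans hmin
  · exact (lambda1_le_rayleigh (hne _ hgS') hgS'.2).trans (hrayleigh _ hgS').le

lemma pEnergy_update_add_le (hp : 1 ≤ p) {f : V → ℝ} (hf : ∀ u, 0 ≤ f u) {v w : V}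
    (hfv : f v = 0) (hvw : G.Adj v w) {t : ℝ} (ht : 0 ≤ t) (htw : t < f w) :
    pEnergy G p (Function.update f v t) + p * (f w - t) ^ (p - 1) * t ≤
      pEnergy G p f + G.degree v * t ^ p := by
  set g := Function.update f v t
  set X := p * (f w - t) ^ (p - 1) * t
  have hedge : ∀ e ∈ G.edgeFinset, edgeTerm p g e + (if e = s(v, w) then X else 0) ≤
      edgeTerm p f e + if v ∈ e then t ^ p else 0 := by
    intro e _
    split_ifs with he hve hve
    · subst he
      have hbern := rpow_add_mul_le_rpow_add hp (sub_pos.2 htw) ht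
      rw [sub_add_cancel] at hbern
      simp only [edgeTerm_mk, g, Function.update_self, Function.update_of_ne hvw.ne.symm, hfv,
        zero_sub, abs_neg, abs_of_nonneg (hf w), abs_sub_comm t, abs_of_pos (sub_pos.2 htw)]
      linarith [Real.rpow_nonneg ht p]
    · exact absurd (he ▸ Sym2.mem_mk_left v w) hve
    all_goals simpa [hve] using edgeTerm_update_le (by linarith) hf hfv ht e
  have hdeg : ∑ e ∈ G.edgeFinset, (if v ∈ e then t ^ p else 0) = G.degree v * t ^ p := by
    rw [← Finset.sum_filter, ← G.incidenceFinset_eq_filter, Finset.sum_const,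
      G.card_incidenceFinset_eq_degree, nsmul_eq_mul]
  have hsum := Finset.sum_le_sum hedge
  rwa [Finset.sum_add_distrib, Finset.sum_add_distrib, Finset.sum_ite_eq',
    if_pos (G.mem_edgeFinset.2 hvw), hdeg] at hsum

/-- Raising `f v` from `0` to a small `t` saves `≈ t` on the edge `vw` and costs `O(t ^ p)` on the
others. -/
lemma lambda1_lt_rayleigh_of_adj (hp : 1 < p) {f : V → ℝ} (hf : ∀ u, 0 ≤ f u)
    (hb : ∀ u, G.degree u = 1 → f u = 0) {v w : V} (hv : G.degree v ≠ 1) (hfv : f v = 0)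
    (hvw : G.Adj v w) (hfw : 0 < f w) : lambda1 G p < rayleigh G p f := by
  have hB : 0 < p * (f w / 2) ^ (p - 1) := by positivity
  have hIoo : ∀ᶠ t in 𝓝[>] (0 : ℝ), t ∈ Set.Ioo 0 (f w / 2) := Ioo_mem_nhdsGT (half_pos hfw)
  obtain ⟨t, ⟨ht0, htw⟩, hsmall⟩ :=
    (hIoo.and (eventually_mul_rpow_lt (sub_pos.2 hp) hB (G.degree v))).exists
  set g := Function.update f v t
  have hg0 : g ≠ 0 := fun h => ht0.ne' (by simpa [g] using congrFun h v)
  have hgb : ∀ u, G.degree u = 1 → g u = 0 := fun u hu => by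
    rw [← hb u hu]
    exact Function.update_of_ne (show u ≠ v by rintro rfl; exact hv hu) t f
  have hE : pEnergy G p g < pEnergy G p f := by
    have hupd := pEnergy_update_add_le hp.le hf hfv hvw ht0.le (by linarith)
    have htp : t ^ p = t ^ (p - 1) * t := by rw [← Real.rpow_add_one ht0.ne', sub_add_cancel]
    have hgain : (G.degree v : ℝ) * t ^ p < p * (f w - t) ^ (p - 1) * t := calc
      (G.degree v : ℝ) * t ^ p = G.degree v * t ^ (p - 1) * t := by rw [htp, mul_assoc]
      _ < p * (f w / 2) ^ (p - 1) * t := by gcongr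
      _ ≤ p * (f w - t) ^ (p - 1) * t := by gcongr; linarith
    linarith
  have hM : pMass p f ≤ pMass p g := Finset.sum_le_sum fun u _ => by
    rcases eq_or_ne u v with rfl | hu
    · simp [g, hfv, Real.zero_rpow (by linarith : p ≠ 0), Real.rpow_nonneg (abs_nonneg t)]
    · rw [show g u = f u from Function.update_of_ne hu t f]
  have hMpos : 0 < pMass p f := pMass_pos fun h => hfw.ne' (by simp [h])
  calc lambda1 G p ≤ pEnergy G p g / pMass p g := lambda1_le_rayleigh hg0 hgb
    _ ≤ pEnergy G p g / pMass p f := div_le_div_of_nonneg_left (pEnergy_nonneg g) hMpos hM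
    _ < pEnergy G p f / pMass p f := div_lt_div_of_pos_right hE hMpos

end Graph

section Tadpole

variable {n i : ℕ}

lemma tadpole_adj {a b : Fin n} :
    (tadpole n i).Adj a b ↔ a ≠ b ∧ ((a : ℕ) + 1 = b ∨ (b : ℕ) + 1 = a ∨
      ((a : ℕ) = 0 ∧ (b : ℕ) = i - 1) ∨ ((b : ℕ) = 0 ∧ (a : ℕ) = i - 1)) := by
  simp only [tadpole, SimpleGraph.fromRel_adj]
  tauto

lemma tadpole_edgeFinset [NeZero n] (hi : 3 ≤ i) (hin : i < n) :
    (tadpole n i).edgeFinset = insert s(Fin.ofNat n 0, Fin.ofNat n (i - 1))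
      ((Finset.range (n - 1)).image fun k => s(Fin.ofNat n k, Fin.ofNat n (k + 1))) := by
  ext e
  induction e using Sym2.ind with
  | _ a b =>
    have ha := a.isLt
    have hb := b.isLt
    simp only [SimpleGraph.mem_edgeFinset, SimpleGraph.mem_edgeSet, tadpole_adj,
      Finset.mem_insert, Finset.mem_image, Finset.mem_range, Sym2.eq_iff, Fin.ext_iff,
      Fin.val_ofNat, ne_eq]
    rw [Nat.zero_mod, Nat.mod_eq_of_lt (show i - 1 < n by omega)]
    constructor
    · rintro ⟨hne, h | h | h | h⟩
      · refine Or.inr ⟨a, by omega, Or.inl ⟨Nat.mod_eq_of_lt ha, ?_⟩⟩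
        rw [Nat.mod_eq_of_lt (by omega)]; omega
      · refine Or.inr ⟨b, by omega, Or.inr ⟨Nat.mod_eq_of_lt hb, ?_⟩⟩
        rw [Nat.mod_eq_of_lt (by omega)]; omega
      · exact Or.inl (Or.inl h)
      · exact Or.inl (Or.inr ⟨h.2, h.1⟩)
    · rintro (h | ⟨k, hk, h⟩)
      · omega
      · rw [Nat.mod_eq_of_lt (by omega : k < n), Nat.mod_eq_of_lt (by omega : k + 1 < n)] at h
        omega

lemma pEnergy_tadpole (hi : 3 ≤ i) (hin : i < n) (p : ℝ) (H : ℕ → ℝ) :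
    pEnergy (tadpole n i) p (fun v => H v) =
      ∑ k ∈ Finset.range (n - 1), |H k - H (k + 1)| ^ p + |H 0 - H (i - 1)| ^ p := by
  have : NeZero n := ⟨by omega⟩
  have hval : ∀ k < n, (Fin.ofNat n k : ℕ) = k := fun k hk => by
    rw [Fin.val_ofNat, Nat.mod_eq_of_lt hk]
  rw [pEnergy, tadpole_edgeFinset hi hin, Finset.sum_insert, Finset.sum_image, add_comm]
  · simp only [edgeTerm_mk, hval 0 (by omega), hval (i - 1) (by omega)]
    congr 1
    refine Finset.sum_congr rfl fun k hk => ?_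
    rw [Finset.mem_range] at hk
    rw [hval k (by omega), hval (k + 1) (by omega)]
  · intro k hk l hl hkl
    simp only [Finset.coe_range, Set.mem_Iio] at hk hl
    simp only [Sym2.eq_iff, Fin.ext_iff, hval k (by omega), hval l (by omega),
      hval (k + 1) (by omega), hval (l + 1) (by omega)] at hkl
    omega
  · simp only [Finset.mem_image, Finset.mem_range, Sym2.eq_iff, Fin.ext_iff, not_exists, not_and]
    intro k hk
    simp only [hval k (by omega), hval (k + 1) (by omega), hval 0 (by omega),
      hval (i - 1) (by omega)]
    omega

lemma tadpole_degree_eq_one_iff (hi : 3 ≤ i) (hin : i < n) {v : Fin n} :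
    (tadpole n i).degree v = 1 ↔ (v : ℕ) = n - 1 := by
  have hv := v.isLt
  rw [← SimpleGraph.card_neighborFinset_eq_degree]
  constructor
  · intro h1
    by_contra hlast
    have hnext : (tadpole n i).Adj v ⟨v + 1, by omega⟩ :=
      tadpole_adj.2 ⟨by simp [Fin.ext_iff], by simp⟩
    have hprev : ∃ u : Fin n, (tadpole n i).Adj v u ∧ (u : ℕ) ≠ v + 1 := by
      rcases Nat.eq_zero_or_pos v with h0 | hpos
      · exact ⟨⟨i - 1, by omega⟩, tadpole_adj.2 ⟨by simp [Fin.ext_iff]; omega, by simp [h0]⟩,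
          by simp; omega⟩
      · exact ⟨⟨v - 1, by omega⟩, tadpole_adj.2 ⟨by simp [Fin.ext_iff]; omega, by simp; omega⟩,
          by simp⟩
    obtain ⟨u, hu, hune⟩ := hprev
    have : 1 < ((tadpole n i).neighborFinset v).card := Finset.one_lt_card.2
      ⟨_, (SimpleGraph.mem_neighborFinset _ _ _).2 hnext, u,
        (SimpleGraph.mem_neighborFinset _ _ _).2 hu, by simp [Fin.ext_iff]; omega⟩
    omega
  · intro hlast
    refine Finset.card_eq_one.2 ⟨⟨n - 2, by omega⟩, Finset.ext fun u => ?_⟩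
    have := u.isLt
    simp only [SimpleGraph.mem_neighborFinset, tadpole_adj, Finset.mem_singleton, ne_eq,
      Fin.ext_iff]
    omega

lemma lambda1_tadpole_le (hi : 3 ≤ i) (hin : i < n) {p : ℝ} (hp : 0 < p) (H : ℕ → ℝ)
    (hlast : H (n - 1) = 0) (hM : 0 < ∑ k ∈ Finset.range n, |H k| ^ p) :
    lambda1 (tadpole n i) p ≤
      (∑ k ∈ Finset.range (n - 1), |H k - H (k + 1)| ^ p + |H 0 - H (i - 1)| ^ p) /
        ∑ k ∈ Finset.range n, |H k| ^ p := by
  have hmass : pMass p (fun v : Fin n => H v) = ∑ k ∈ Finset.range n, |H k| ^ p :=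
    Fin.sum_univ_eq_sum_range (fun k => |H k| ^ p) n
  rw [← pEnergy_tadpole hi hin, ← hmass]
  refine lambda1_le_rayleigh (fun h => ?_) fun v hv => ?_
  · rw [← hmass, h] at hM
    simp [pMass, Real.zero_rpow hp.ne'] at hM
  · rw [(tadpole_degree_eq_one_iff hi hin).1 hv, hlast]

/-- The test function equal to `u` on the triangle vertices `t₁, t₂` of `T_{n,3}`, to `w` on the
junction `t₃`, and to `a` along the tail. -/
lemma lambda1_tadpole_three_le (hn : 4 ≤ n) {p : ℝ} (hp : 0 < p) {a : ℕ → ℝ}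
    (hlast : a (n - 1) = 0) {u w : ℝ}
    (hD : 0 < 2 * |u| ^ p + |w| ^ p + ∑ k ∈ Finset.Ico 3 n, |a k| ^ p) :
    lambda1 (tadpole n 3) p ≤
      (2 * |u - w| ^ p + |w - a 3| ^ p + ∑ k ∈ Finset.Ico 3 (n - 1), |a k - a (k + 1)| ^ p) /
        (2 * |u| ^ p + |w| ^ p + ∑ k ∈ Finset.Ico 3 n, |a k| ^ p) := by
  set H : ℕ → ℝ := fun k => if k ≤ 1 then u else if k = 2 then w else a k
  have htail : ∀ k, 3 ≤ k → H k = a k := fun k hk => by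
    simp only [H, if_neg (show ¬k ≤ 1 by omega), if_neg (show k ≠ 2 by omega)]
  have hE : ∑ k ∈ Finset.range (n - 1), |H k - H (k + 1)| ^ p + |H 0 - H (3 - 1)| ^ p =
      2 * |u - w| ^ p + |w - a 3| ^ p + ∑ k ∈ Finset.Ico 3 (n - 1), |a k - a (k + 1)| ^ p := by
    rw [sum_range_eq_add_sum_Ico_three _ (by omega), Finset.sum_congr rfl fun k hk => by
      rw [htail k (Finset.mem_Ico.1 hk).1, htail (k + 1) (by linarith [Finset.mem_Ico.1 hk])]]
    simp [H, Real.zero_rpow hp.ne']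
    ring
  have hM : ∑ k ∈ Finset.range n, |H k| ^ p =
      2 * |u| ^ p + |w| ^ p + ∑ k ∈ Finset.Ico 3 n, |a k| ^ p := by
    rw [sum_range_eq_add_sum_Ico_three _ (by omega),
      Finset.sum_congr rfl fun k hk => by rw [htail k (Finset.mem_Ico.1 hk).1]]
    simp [H]
    ring
  rw [← hE, ← hM]
  exact lambda1_tadpole_le le_rfl (by omega) hp H (by rw [htail _ (by omega), hlast]) (hM ▸ hD)

lemma pos_of_tadpole_minimizer (hi : 3 ≤ i) (hin : i < n) {p : ℝ} (hp : 1 < p)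
    {f : Fin n → ℝ} (hf : ∀ v, 0 ≤ f v) (hb : ∀ v, (tadpole n i).degree v = 1 → f v = 0)
    (hM : pMass p f = 1) (hE : pEnergy (tadpole n i) p f = lambda1 (tadpole n i) p) :
    0 < f ⟨0, by omega⟩ := by
  by_contra h0
  have hS : (Finset.univ.filter fun v => f v ≠ 0).Nonempty := by
    have hf0 : f ≠ 0 := by
      rintro rfl
      simp [pMass, Real.zero_rpow (by linarith : p ≠ 0)] at hM
    obtain ⟨v, hv⟩ := Function.ne_iff.1 hf0
    exact ⟨v, by simpa using hv⟩
  set w := (Finset.univ.filter fun v => f v ≠ 0).min' hS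
  have hfw : f w ≠ 0 := (Finset.mem_filter.1 (Finset.min'_mem _ hS)).2
  have hw0 : (w : ℕ) ≠ 0 := fun h => h0 <| by
    rw [show (⟨0, _⟩ : Fin n) = w from Fin.ext h.symm]
    exact (hf w).lt_of_ne' hfw
  have hwlast : (w : ℕ) ≠ n - 1 := fun h => hfw (hb w ((tadpole_degree_eq_one_iff hi hin).2 h))
  set v : Fin n := ⟨w - 1, by omega⟩
  have hfv : f v = 0 := by
    by_contra hv
    have := Finset.min'_le (Finset.univ.filter fun v => f v ≠ 0) v
      (Finset.mem_filter.2 ⟨Finset.mem_univ v, hv⟩)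
    rw [Fin.le_def] at this
    simp only [v] at this
    omega
  have hadj : (tadpole n i).Adj v w :=
    tadpole_adj.2 ⟨by simp [v, Fin.ext_iff]; omega, by simp [v]; omega⟩
  have hv : (tadpole n i).degree v ≠ 1 := by
    rw [Ne, tadpole_degree_eq_one_iff hi hin]
    simp only [v]
    omega
  have := lambda1_lt_rayleigh_of_adj hp hf hb hv hfv hadj ((hf w).lt_of_ne' hfw)
  rw [rayleigh_eq_div, hM, div_one, hE] at this
  exact lt_irrefl _ this

end Tadpole

section Folding

variable {p a₁ a₃ A T S N : ℝ}

lemma exists_folded_lt_of_ne (hp : 0 < p) (h₁ : 0 ≤ a₁) (hA : 0 ≤ A) (hT : 0 ≤ T) (hN : 0 < N)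
    (hcyc : 2 * |a₁ - A| ^ p + 2 * |a₃ - A| ^ p + T ≤ N) (hM : 2 * A ^ p + a₁ ^ p + S = 1)
    (hne : ¬(a₁ = A ∧ a₃ = A)) :
    ∃ u w : ℝ, 0 < 2 * |u| ^ p + |w| ^ p + S ∧
      (2 * |u - w| ^ p + |w - a₃| ^ p + T) / (2 * |u| ^ p + |w| ^ p + S) < N := by
  set u := max a₁ A
  have hu : 0 ≤ u := hA.trans (le_max_right _ _)
  have hua : a₁ ^ p ≤ u ^ p := Real.rpow_le_rpow h₁ (le_max_left _ _) hp.le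
  have huA : A ^ p ≤ u ^ p := Real.rpow_le_rpow hA (le_max_right _ _) hp.le
  have hE : 2 * |u - A| ^ p + |A - a₃| ^ p + T ≤ N - |a₃ - A| ^ p := by
    have : |u - A| ^ p ≤ |a₁ - A| ^ p := Real.rpow_le_rpow (abs_nonneg _)
      (by simpa using abs_max_sub_max_le_abs a₁ A A) hp.le
    rw [abs_sub_comm A]
    linarith
  have hE0 : 0 ≤ 2 * |u - A| ^ p + |A - a₃| ^ p + T := by positivity
  refine ⟨u, A, ?_, ?_⟩ <;> rw [abs_of_nonneg hu, abs_of_nonneg hA]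
  · linarith [Real.rpow_nonneg hA p]
  by_cases h₃ : a₃ = A
  · have hD : 1 < 2 * u ^ p + A ^ p + S := by
      rcases lt_or_gt_of_ne (fun h => hne ⟨h, h₃⟩) with h | h
      · linarith [Real.rpow_lt_rpow h₁ h hp, show u = A from max_eq_right h.le]
      · linarith [Real.rpow_lt_rpow hA h hp, show u = a₁ from max_eq_left h.le]
    calc _ ≤ N / (2 * u ^ p + A ^ p + S) := by
          gcongr
          linarith [Real.rpow_nonneg (abs_nonneg (a₃ - A)) p]
      _ < N := div_lt_self hN hD
  · have hgap : 0 < |a₃ - A| ^ p := Real.rpow_pos_of_pos (abs_pos.2 (sub_ne_zero.2 h₃)) p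
    calc _ ≤ 2 * |u - A| ^ p + |A - a₃| ^ p + T := div_le_self hE0 (by linarith)
      _ < N := by linarith

lemma exists_folded_lt_of_eq (hp : 1 < p) (hA : 0 < A) (hN : 0 < N) (hTN : T ≤ N)
    (hM : 3 * A ^ p + S = 1) :
    ∃ u w : ℝ, 0 < 2 * |u| ^ p + |w| ^ p + S ∧
      (2 * |u - w| ^ p + |w - A| ^ p + T) / (2 * |u| ^ p + |w| ^ p + S) < N := by
  have hB : 0 < p * A ^ (p - 1) * N := by positivity
  obtain ⟨t, ht, ht0⟩ :=
    ((eventually_mul_rpow_lt (sub_pos.2 hp) hB 1).and self_mem_nhdsWithin).exists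
  rw [one_mul] at ht
  have hbern := rpow_add_mul_le_rpow_add hp.le hA ht0.le
  have htp : t ^ p = t ^ (p - 1) * t := by rw [← Real.rpow_add_one ht0.ne', sub_add_cancel]
  have hD : 1 + 2 * (p * A ^ (p - 1) * t) ≤ 2 * (A + t) ^ p + A ^ p + S := by linarith
  have hDpos : 0 < 2 * (A + t) ^ p + A ^ p + S := by nlinarith [mul_pos hB ht0]
  refine ⟨A + t, A, ?_, ?_⟩ <;> rw [abs_of_pos (show 0 < A + t by linarith), abs_of_pos hA]
  · exact hDpos
  rw [add_sub_cancel_left, sub_self, abs_zero, Real.zero_rpow (by linarith), add_zero,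
    abs_of_pos ht0, div_lt_iff₀ hDpos]
  have : t ^ p < p * A ^ (p - 1) * N * t := by
    rw [htp]
    exact mul_lt_mul_of_pos_right ht ht0
  nlinarith

/-- The left-hand quotient is that of `lambda1_tadpole_three_le`; the right-hand side is the energy
on `T_{n,4}` of a function with values `a₀, …, a₃` on the cycle and tail energy `T`, and `S` is the
tail mass. -/
lemma exists_folded_lt (hp : 1 < p) {a₀ a₂ : ℝ} (h₀ : 0 < a₀) (h₁ : 0 ≤ a₁) (h₂ : 0 ≤ a₂)
    (h₃ : 0 ≤ a₃) (hT : 0 ≤ T) (hM : |a₀| ^ p + |a₁| ^ p + |a₂| ^ p + S = 1)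
    (hN : 0 < |a₀ - a₁| ^ p + |a₁ - a₂| ^ p + |a₂ - a₃| ^ p + T + |a₀ - a₃| ^ p) :
    ∃ u w : ℝ, 0 < 2 * |u| ^ p + |w| ^ p + S ∧
      (2 * |u - w| ^ p + |w - a₃| ^ p + T) / (2 * |u| ^ p + |w| ^ p + S) <
        |a₀ - a₁| ^ p + |a₁ - a₂| ^ p + |a₂ - a₃| ^ p + T + |a₀ - a₃| ^ p := by
  have hp0 : 0 < p := by linarith
  set N := |a₀ - a₁| ^ p + |a₁ - a₂| ^ p + |a₂ - a₃| ^ p + T + |a₀ - a₃| ^ p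
  set A := ((a₀ ^ p + a₂ ^ p) / 2) ^ p⁻¹
  have hsum : 0 < (a₀ ^ p + a₂ ^ p) / 2 := by positivity
  have hA : 0 < A := by positivity
  have hmean : 2 * A ^ p = a₀ ^ p + a₂ ^ p := by
    rw [Real.rpow_inv_rpow hsum.le hp0.ne']
    ring
  have hcyc : 2 * |a₁ - A| ^ p + 2 * |a₃ - A| ^ p + T ≤ N := by
    have h1 := two_mul_abs_sub_rpow_le hp.le h₀.le h₂ h₁ hA.le hmean
    have h3 := two_mul_abs_sub_rpow_le hp.le h₀.le h₂ h₃ hA.le hmean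
    rw [abs_sub_comm a₁ a₀] at h1
    rw [abs_sub_comm a₃ a₀, abs_sub_comm a₃ a₂] at h3
    linarith
  have hTN : T ≤ N := by
    linarith [Real.rpow_nonneg (abs_nonneg (a₁ - A)) p, Real.rpow_nonneg (abs_nonneg (a₃ - A)) p]
  rw [abs_of_pos h₀, abs_of_nonneg h₁, abs_of_nonneg h₂] at hM
  by_cases heq : a₁ = A ∧ a₃ = A
  · obtain ⟨rfl, rfl⟩ := heq
    exact exists_folded_lt_of_eq hp hA hN hTN (by linarith)
  · exact exists_folded_lt_of_ne hp0 h₁ hA.le hT hN hcyc (by linarith) heq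

end Folding

/-- Comparison of the first `p`-Dirichlet eigenvalues of `T_{n,4}` and `T_{n,3}`. -/
theorem tadpole_four_gt_tadpole_three (n : ℕ) (hn : 5 ≤ n) {p : ℝ} (hp : 1 < p) :
    lambda1 (tadpole n 4) p > lambda1 (tadpole n 3) p := by
  have hp0 : 0 < p := by linarith
  have hdeg : ∀ v : Fin n, (tadpole n 4).degree v = 1 ↔ (v : ℕ) = n - 1 := fun v =>
    tadpole_degree_eq_one_iff (by norm_num) (by omega)
  obtain ⟨f, hf, hb, hM, hE⟩ :=
    exists_nonneg_minimizer (G := tadpole n 4) hp0 (v₀ := ⟨0, by omega⟩) (by simp [hdeg]; omega)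
  set a : ℕ → ℝ := fun k => if h : k < n then f ⟨k, h⟩ else 0
  have hfa : f = fun v : Fin n => a v := funext fun v => by simp [a]
  have ha : ∀ k, 0 ≤ a k := fun k => by
    simp only [a]
    split_ifs
    exacts [hf _, le_rfl]
  have ha₀ : 0 < a 0 :=
    (dif_pos (by omega)).trans_gt (pos_of_tadpole_minimizer (by norm_num) (by omega) hp hf hb hM hE)
  have hlast : a (n - 1) = 0 := (dif_pos (by omega)).trans (hb _ ((hdeg _).2 rfl))
  have hpath := sum_range_abs_sub_rpow_pos (p := p) (hlast ▸ ha₀.ne' : a 0 ≠ a (n - 1))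
  rw [sum_range_eq_add_sum_Ico_three _ (by omega)] at hpath
  rw [hfa, pEnergy_tadpole (by norm_num) (by omega),
    sum_range_eq_add_sum_Ico_three _ (by omega)] at hE
  rw [hfa, pMass, Fin.sum_univ_eq_sum_range (fun k => |a k| ^ p),
    sum_range_eq_add_sum_Ico_three _ (by omega)] at hM
  obtain ⟨u, w, hD, hlt⟩ := exists_folded_lt hp ha₀ (ha 1) (ha 2) (ha 3)
    (Finset.sum_nonneg fun _ _ => Real.rpow_nonneg (abs_nonneg _) _) hM
    (by linarith [Real.rpow_nonneg (abs_nonneg (a 0 - a (4 - 1))) p])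
  rw [← hE]
  exact (lambda1_tadpole_three_le (by omega) hp0 hlast hD).trans_lt hlt
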